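/- arXiv:1001.1527 — 2 statements merged into one kernel-verified Lean document; each statement's English description precedes it below -/
import Mathlib

section
/- Let q₀ ∈ (0, π/2). If x, y ∈ ℝ²∖{0} satisfy ∠(x,y) ≤ q₀/2 and y ∈ C^F_{π/2−q₀}(x) ∪ C^B_{π/2−q₀}(x), then ‖y − x‖ ≤ csc(q₀/2)·‖x‖·∠(x,y). -/
open MeasureTheory Set Metric Filter
open scoped Classical ENNReal Topology Pointwise RealInnerProductSpace

noncomputable section

/-! ## The plane and the lattice -/

abbrev Z2 := ℤ × ℤ
abbrev E2 := EuclideanSpace ℝ (Fin 2)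

/-- the point of `ℝ²` with the given coordinates -/
def mk2 (a b : ℝ) : E2 := (WithLp.equiv 2 (Fin 2 → ℝ)).symm ![a, b]

/-- the embedding of the lattice `ℤ²` into the Euclidean plane -/
def toE2 (v : Z2) : E2 := mk2 v.1 v.2

/-- coordinatewise integer part -/
def fl (x : E2) : Z2 := (⌊x 0⌋, ⌊x 1⌋)

/-- nearest-neighbour adjacency on `ℤ²` -/
def Adj (a b : Z2) : Prop := (a.1 - b.1).natAbs + (a.2 - b.2).natAbs = 1

instance (a b : Z2) : Decidable (Adj a b) := by unfold Adj; infer_instance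

/-- strict lexicographic order on `ℤ²` (used to orient edges) -/
def lexLt (a b : Z2) : Prop := a.1 < b.1 ∨ (a.1 = b.1 ∧ a.2 < b.2)

instance (a b : Z2) : Decidable (lexLt a b) := by unfold lexLt; infer_instance

/-- weak lexicographic order on `ℤ²` -/
def lexLe (a b : Z2) : Prop := a.1 < b.1 ∨ (a.1 = b.1 ∧ a.2 ≤ b.2)

/-- a nearest-neighbour edge of `ℤ²`, recorded with lexicographically ordered endpoints -/
def IsEdge (e : Z2 × Z2) : Prop := Adj e.1 e.2 ∧ lexLt e.1 e.2

instance (e : Z2 × Z2) : Decidable (IsEdge e) := by unfold IsEdge; infer_instance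

abbrev Edge := {e : Z2 × Z2 // IsEdge e}

/-- a configuration: an assignment of open/closed to every edge of `ℤ²` -/
abbrev Config := Edge → Bool

/-- the edge between the adjacent sites `a` and `b` is open -/
def EOpen (ω : Config) (a b : Z2) : Prop :=
  (∃ h : IsEdge (a, b), ω ⟨(a, b), h⟩ = true) ∨ ∃ h : IsEdge (b, a), ω ⟨(b, a), h⟩ = true

/-- `x ↔ y` : `x` and `y` are joined by a path of open edges -/
def Conn (ω : Config) (x y : Z2) : Prop := Relation.ReflTransGen (EOpen ω) x y

/-- the edge between `a` and `b` is open and contained (as a subset of `ℝ²`) in `A` -/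
def EOpenIn (ω : Config) (A : Set E2) (a b : Z2) : Prop :=
  EOpen ω a b ∧ segment ℝ (toE2 a) (toE2 b) ⊆ A

/-- `x ↔^A y` : `x` and `y` are joined by a path of open edges contained in `A` -/
def ConnIn (ω : Config) (A : Set E2) (x y : Z2) : Prop :=
  Relation.ReflTransGen (EOpenIn ω A) x y

/-! ## Circuits -/

/-- a cycle in `ℤ²` that visits no vertex twice -/
structure Circuit where
  len : ℕ
  four_le : 4 ≤ len
  f : ZMod len → Z2
  inj : Function.Injective f
  adj : ∀ i, Adj (f i) (f (i + 1))

/-- the closed subset of `ℝ²` formed by the unit edges of the cycle -/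
def Circuit.carrier (Γ : Circuit) : Set E2 :=
  ⋃ i, segment ℝ (toE2 (Γ.f i)) (toE2 (Γ.f (i + 1)))

/-- all edges of the circuit are open -/
def Circuit.IsOpenCir (Γ : Circuit) (ω : Config) : Prop := ∀ i, EOpen ω (Γ.f i) (Γ.f (i + 1))

/-- `INT S`: the union of the bounded connected components of `ℝ² ∖ S`
(for a circuit, the bounded connected component of the complement) -/
def INT (S : Set E2) : Set E2 :=
  {x | x ∉ S ∧ Bornology.IsBounded (connectedComponentIn Sᶜ x)}

/-- planar Lebesgue measure, as a real number -/
def vol (S : Set E2) : ℝ := (volume S).toReal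

def IsCircuit (S : Set E2) : Prop := ∃ Γ : Circuit, Γ.carrier = S

/-- `S` is the carrier of an open circuit -/
def IsOpenCircuit (ω : Config) (S : Set E2) : Prop := ∃ Γ : Circuit, Γ.carrier = S ∧ Γ.IsOpenCir ω

/-- an outermost open circuit -/
def IsOutermost (ω : Config) (S : Set E2) : Prop :=
  IsOpenCircuit ω S ∧ ∀ S', IsOpenCircuit ω S' → INT S ⊆ INT S' → S' = S

/-- `Γ₀`: the unique outermost open circuit that surrounds the origin when exactly one
such circuit exists, and `∅` otherwise -/
def Gamma0 (ω : Config) : Set E2 :=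
  if h : ∃! S : Set E2, IsOutermost ω S ∧ (0 : E2) ∈ INT S then h.exists.choose else ∅

/-- `V(Γ) = Γ ∩ ℤ²` -/
def VSet (S : Set E2) : Set E2 := S ∩ Set.range toE2

/-- the boundary of the convex hull of `V(Γ)` -/
def hullB (S : Set E2) : Set E2 := frontier (convexHull ℝ (VSet S))

/-- maximum local roughness -/
def MLR (S : Set E2) : ℝ := sSup ((fun x => infDist x (hullB S)) '' VSet S)

/-- maximum facet length -/
def MFL (S : Set E2) : ℝ :=
  sSup {r : ℝ | ∃ x y : E2, r = dist x y ∧ segment ℝ x y ⊆ hullB S}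

/-- conditional probability `P(A ∣ B)` -/
def cP (P : Measure Config) (A B : Set Config) : ℝ := (P (A ∩ B)).toReal / (P B).toReal

/-! ## The random cluster measure -/

/-- the edges with both endpoints in `Λ` -/
def edgesIn (Λ : Finset Z2) : Finset (Z2 × Z2) := (Λ ×ˢ Λ).filter IsEdge

/-- a configuration on the edges within `Λ` -/
abbrev LConfig (Λ : Finset Z2) := {e // e ∈ edgesIn Λ} → Bool

def locOpen (Λ : Finset Z2) (η : LConfig Λ) (a b : Z2) : Prop :=
  (∃ h : (a, b) ∈ edgesIn Λ, η ⟨(a, b), h⟩ = true) ∨ ∃ h : (b, a) ∈ edgesIn Λ, η ⟨(b, a), h⟩ = true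

/-- `k(η)`: the number of connected components of the graph on `Λ` whose edge set is the
set of `η`-open edges within `Λ` -/
def kComp (Λ : Finset Z2) (η : LConfig Λ) : ℕ :=
  Set.ncard {C : Set Z2 | ∃ a ∈ Λ, C = {b | b ∈ Λ ∧ Relation.ReflTransGen (locOpen Λ η) a b}}

/-- the random-cluster weight `p^{#open} (1-p)^{#closed} q^{k(η)}` -/
def rcWeight (p q : ℝ) (Λ : Finset Z2) (η : LConfig Λ) : ℝ :=
  p ^ (Finset.univ.filter fun e => η e = true).card *
    (1 - p) ^ (Finset.univ.filter fun e => η e = false).card * q ^ kComp Λ η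

/-- the free random cluster probability on `Λ` of a set of local configurations -/
def rcProb (p q : ℝ) (Λ : Finset Z2) (S : Set (LConfig Λ)) : ℝ :=
  (∑ η : LConfig Λ, if η ∈ S then rcWeight p q Λ η else 0) / ∑ η : LConfig Λ, rcWeight p q Λ η

/-- the box `Λ_N = {-N, …, N}²` -/
def box (N : ℕ) : Finset Z2 := Finset.Icc (-(N : ℤ)) (N : ℤ) ×ˢ Finset.Icc (-(N : ℤ)) (N : ℤ)

/-- the hypotheses on the subcritical random-cluster measure `P` with parameters `p, q`:
(i) finite-volume free random-cluster measures on the boxes `Λ_N` converge to `P` on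
cylinder events; (ii) exponential decay of connectivity. -/
def IsSubcriticalRC (p q : ℝ) (P : Measure Config) : Prop :=
  (∀ (F : Finset Edge) (ζ : Edge → Bool),
      Tendsto
        (fun N : ℕ => rcProb p q (box N)
          {η | ∀ e ∈ F, ∀ h : (e : Z2 × Z2) ∈ edgesIn (box N), η ⟨(e : Z2 × Z2), h⟩ = ζ e})
        atTop (𝓝 ((P {ω | ∀ e ∈ F, ω e = ζ e}).toReal))) ∧
  ∃ c C : ℝ, 0 < c ∧ 0 < C ∧ ∀ N : ℕ,
    (P {ω | ∃ x : Z2, x ∉ box N ∧ Conn ω 0 x}).toReal ≤ C * Real.exp (-c * N)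

/-! ## The Wulff shape, global distortion, centring and the event `AREA` -/

/-- the Wulff shape `λ • ⋂_{u ∈ S¹} {t : ⟨t,u⟩ ≤ ξ(u)}` -/
def wulff (ξ : E2 → ℝ) (lam : ℝ) : Set E2 :=
  lam • ⋂ u ∈ sphere (0 : E2) 1, {t : E2 | (inner ℝ t u : ℝ) ≤ ξ u}

/-- the Hausdorff distance of `S` from the translate by `z` of `n ∂𝒲` -/
def gdVal (ξ : E2 → ℝ) (lam : ℝ) (n : ℕ) (z : Z2) (S : Set E2) : ℝ :=
  hausdorffDist ((fun y => y + toE2 z) '' ((n : ℝ) • frontier (wulff ξ lam))) S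

/-- global distortion -/
def GD (ξ : E2 → ℝ) (lam : ℝ) (n : ℕ) (S : Set E2) : ℝ := ⨅ z : Z2, gdVal ξ lam n z S

/-- `z` is the lexicographically minimal minimiser in the definition of `GD` -/
def IsCen (ξ : E2 → ℝ) (lam : ℝ) (n : ℕ) (S : Set E2) (z : Z2) : Prop :=
  gdVal ξ lam n z S = GD ξ lam n S ∧ ∀ z', gdVal ξ lam n z' S = GD ξ lam n S → lexLe z z'

/-- the centre of a circuit -/
def cen (ξ : E2 → ℝ) (lam : ℝ) (n : ℕ) (S : Set E2) : Z2 :=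
  if h : ∃ z, IsCen ξ lam n S z then h.choose else 0

/-- the event `AREA_{0,A} = {|INT(Γ₀)| ≥ A} ∩ {cen(Γ₀) = 0}` (centring at scale `n`) -/
def AREA (ξ : E2 → ℝ) (lam : ℝ) (n : ℕ) (A : ℝ) : Set Config :=
  {ω | A ≤ vol (INT (Gamma0 ω)) ∧ cen ξ lam n (Gamma0 ω) = 0}

/-- the hypotheses on the inverse correlation length `ξ` and the Wulff normalisation `lam` -/
def WulffHyp (P : Measure Config) (ξ : E2 → ℝ) (lam : ℝ) : Prop :=
  (∀ x : E2,
      Tendsto (fun k : ℕ => -((k : ℝ)⁻¹) * Real.log ((P {ω | Conn ω 0 (fl ((k : ℝ) • x))}).toReal))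
        atTop (𝓝 (ξ x))) ∧
    0 < lam ∧ volume (wulff ξ lam) = 1

/-! ## Angles, cones and sectors -/

/-- the angle between two vectors of `ℝ²` -/
def ang (u w : E2) : ℝ := InnerProductGeometry.angle u w

/-- rotation by `π/2` counterclockwise -/
def perp (v : E2) : E2 := mk2 (-(v 1)) (v 0)

/-- the forward cone `C^F_{π/2 - q₀}(v)` -/
def coneF (q₀ : ℝ) (v : E2) : Set E2 := insert v {w | ang (w - v) (perp v) ≤ Real.pi / 2 - q₀}

/-- the backward cone `C^B_{π/2 - q₀}(v)` -/
def coneB (q₀ : ℝ) (v : E2) : Set E2 := insert v {w | ang (w - v) (-perp v) ≤ Real.pi / 2 - q₀}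

/-- the cone `W_{v,c}` with apex `0` about the direction of `v`, of half-aperture `c` -/
def coneDir (v : E2) (c : ℝ) : Set E2 := insert 0 {z | z ≠ 0 ∧ ang z v ≤ c}

/-- the argument of a point of the plane -/
def argOf (z : E2) : ℝ := Complex.arg ⟨z 0, z 1⟩

/-- reduction modulo `2π` to `[0, 2π)` -/
def mod2pi (t : ℝ) : ℝ := t - 2 * Real.pi * ⌊t / (2 * Real.pi)⌋

/-- the unit vector of argument `θ` -/
def dirE (θ : ℝ) : E2 := mk2 (Real.cos θ) (Real.sin θ)

/-- the closed angular sector `A_{x,y}` with apex `0` swept counterclockwise from the ray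
through `x` to the ray through `y` -/
def sector (x y : E2) : Set E2 :=
  insert 0 {z | ∃ r s : ℝ, 0 < r ∧ 0 ≤ s ∧ s ≤ mod2pi (argOf y - argOf x) ∧
    z = r • dirE (argOf x + s)}

/-! ## Open clusters, open paths, good area capture -/

/-- the open cluster of `x`, as the union of the closed open edges of its component -/
def cluster (ω : Config) (x : Z2) : Set E2 :=
  ⋃ (a : Z2) (b : Z2) (_ : Conn ω x a ∧ EOpen ω a b), segment ℝ (toE2 a) (toE2 b)

/-- the open cluster of `x` within the region `A` -/
def clusterIn (ω : Config) (A : Set E2) (x : Z2) : Set E2 :=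
  ⋃ (a : Z2) (b : Z2) (_ : ConnIn ω A x a ∧ EOpenIn ω A a b), segment ℝ (toE2 a) (toE2 b)

/-- the common open cluster `γ'_{x,y}` of `x` and `y` -/
def cluster2 (ω : Config) (x y : Z2) : Set E2 := cluster ω x ∩ cluster ω y

/-- `fluc_{x,y}(S)`: the maximal distance of a point of `S` from the segment `[x,y]` -/
def fluc (x y : Z2) (S : Set E2) : ℝ :=
  sSup ((fun z => infDist z (segment ℝ (toE2 x) (toE2 y))) '' S)

/-- `S` is (the carrier of) an open path from `x` to `y` contained in `A` -/
def IsOpenPathIn (ω : Config) (A : Set E2) (x y : Z2) (S : Set E2) : Prop :=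
  ∃ l : List Z2, l.Nodup ∧ l.head? = some x ∧ l.getLast? = some y ∧
    List.Chain' (EOpenIn ω A) l ∧
    S = ⋃ p ∈ l.zip l.tail, segment ℝ (toE2 p.1) (toE2 p.2)

/-- the union of the bounded connected components of `A ∖ S` -/
def boundedCompIn (A S : Set E2) : Set E2 :=
  {z | z ∈ A \ S ∧ Bornology.IsBounded (connectedComponentIn (A \ S) z)}

/-- the event `GAC(x,y,ε)` of `ε`-good area capture in the sector `A_{x,y}` -/
def GAC (q₀ : ℝ) (ω : Config) (x y : Z2) (ε : ℝ) : Prop :=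
  ConnIn ω (sector (toE2 x) (toE2 y)) x y ∧
  clusterIn ω (sector (toE2 x) (toE2 y)) x ⊆
    coneF (q₀ / 2) (toE2 x) ∩ coneB (q₀ / 2) (toE2 y) ∧
  ∃ S : Set E2,
    (IsOpenPathIn ω (sector (toE2 x) (toE2 y)) x y S ∧
      ∀ S', IsOpenPathIn ω (sector (toE2 x) (toE2 y)) x y S' →
        boundedCompIn (sector (toE2 x) (toE2 y)) S ⊆
          boundedCompIn (sector (toE2 x) (toE2 y)) S' → S' = S) ∧
    diam S ≤ 2 * dist (toE2 x) (toE2 y) ∧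
    vol (convexHull ℝ {0, toE2 x, toE2 y}) +
        ε * dist (toE2 x) (toE2 y) ^ (3 / 2 : ℝ) *
          Real.log (dist (toE2 x) (toE2 y)) ^ (1 / 2 : ℝ) ≤
      vol (boundedCompIn (sector (toE2 x) (toE2 y)) S)

/-- the edge `e`, as a closed unit segment of `ℝ²` -/
def edgeSeg (e : Edge) : Set E2 := segment ℝ (toE2 (e : Z2 × Z2).1) (toE2 (e : Z2 × Z2).2)

/-! ## Mixing properties -/

/-- the σ-algebra `σ_A` generated by the edge variables in `A` -/
def sigmaOn (A : Set Edge) : MeasurableSpace Config :=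
  MeasurableSpace.comap (fun (ω : Config) (e : A) => ω (e : Edge)) inferInstance

/-- `V(A)`: the endpoints of the edges of `A` -/
def VE (A : Set Edge) : Set Z2 := {v | ∃ e ∈ A, (e : Z2 × Z2).1 = v ∨ (e : Z2 × Z2).2 = v}

/-- the ratio-weak-mixing property with constants `Cr, lam` -/
def RWM (Cr lam : ℝ) (P : Measure Config) : Prop :=
  ∀ 𝒟 ℱ : Set Edge,
    Cr * ∑' (x : VE 𝒟) (y : VE ℱ), Real.exp (-lam * dist (toE2 (x : Z2)) (toE2 (y : Z2))) < 1 →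
    ∀ D F : Set Config, MeasurableSet[sigmaOn 𝒟] D → MeasurableSet[sigmaOn ℱ] F →
      0 < (P D).toReal * (P F).toReal →
      |(P (D ∩ F)).toReal / ((P D).toReal * (P F).toReal) - 1| ≤
        Cr * ∑' (x : VE 𝒟) (y : VE ℱ), Real.exp (-lam * dist (toE2 (x : Z2)) (toE2 (y : Z2)))

/-- the bounded energy property with constant `cbe` -/
def BddEnergy (cbe : ℝ) (P : Measure Config) : Prop :=
  ∀ (e : Edge) (F : Set Config), MeasurableSet[sigmaOn {e}ᶜ] F →
    cbe * (P F).toReal ≤ (P (F ∩ {ω | ω e = true})).toReal ∧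
      (P (F ∩ {ω | ω e = true})).toReal ≤ (1 - cbe) * (P F).toReal

/-- `κ_m(A,B)` -/
def kappa (lam m : ℝ) (A B : Set Edge) : ℝ :=
  ∑' (x : VE A) (y : VE B),
    if m ≤ dist (toE2 (x : Z2)) (toE2 (y : Z2)) then
      Real.exp (-lam * dist (toE2 (x : Z2)) (toE2 (y : Z2))) else 0

/-- `φ_m(A,B)`: the number of pairs of edges of `A × B` within distance `m` of each other -/
def phiCount (m : ℝ) (A B : Set Edge) : ℕ∞ :=
  {ab : Edge × Edge | ab.1 ∈ A ∧ ab.2 ∈ B ∧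
    ∃ u ∈ edgeSeg ab.1, ∃ v ∈ edgeSeg ab.2, dist u v ≤ m}.encard

/-- `A` and `B` are `(m₀, C₂)`-well separated -/
def WellSep (Cr lam : ℝ) (m₀ C₂ : ℕ) (A B : Set Edge) : Prop :=
  A ∩ B = ∅ ∧ kappa lam m₀ A B ≤ 1 / (2 * Cr) ∧ phiCount (m₀ : ℝ) A B ≤ (C₂ : ℕ∞)

/-! ## Regeneration sites -/

/-- the set of `Γ`-regeneration sites -/
def RG (q₀ c₀ : ℝ) (Γ : Set E2) : Set Z2 :=
  {v | toE2 v ∈ Γ ∧ Γ ∩ coneDir (toE2 v) c₀ ⊆ coneF q₀ (toE2 v) ∪ coneB q₀ (toE2 v)}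

/-- `θ_RG^MAX(Γ)`: the maximal angle of a sector rooted at the origin free of regeneration
sites -/
def thetaRGMax (q₀ c₀ : ℝ) (Γ : Set E2) : ℝ :=
  sSup {r : ℝ | r ∈ Set.Icc 0 (2 * Real.pi) ∧
    ∃ a : E2, ‖a‖ = 1 ∧ coneDir a (r / 2) ∩ (toE2 '' RG q₀ c₀ Γ) = ∅}

/-- the counterclockwise angular displacement from `x` to `u` -/
def ccwDisp (x u : E2) : ℝ := mod2pi (argOf u - argOf x)

/-- `u` is a regeneration site first encountered in a counterclockwise (or clockwise) angular
search about the origin beginning at `x` -/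
def IsFirstRG (q₀ c₀ : ℝ) (Γ : Set E2) (x u : Z2) : Prop :=
  u ∈ RG q₀ c₀ Γ ∧
    ((∀ w ∈ RG q₀ c₀ Γ, ccwDisp (toE2 x) (toE2 u) ≤ ccwDisp (toE2 x) (toE2 w)) ∨
      ∀ w ∈ RG q₀ c₀ Γ, ccwDisp (toE2 u) (toE2 x) ≤ ccwDisp (toE2 w) (toE2 x))

/-- the maximum point-to-regeneration-site distance -/
def MPRG (q₀ c₀ : ℝ) (Γ : Set E2) : ℝ :=
  sSup {d : ℝ | ∃ x : Z2, toE2 x ∈ Γ ∧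
    ∃ u : Z2, IsFirstRG q₀ c₀ Γ x u ∧ d = dist (toE2 x) (toE2 u)}

/-! ## Translation of configurations -/

/-- the translate of the edge `e` by `v` -/
def shiftE (v : Z2) (e : Edge) : Edge :=
  ⟨((e.1.1.1 + v.1, e.1.1.2 + v.2), (e.1.2.1 + v.1, e.1.2.2 + v.2)), by
    obtain ⟨h1, h2⟩ := e.2
    unfold IsEdge Adj lexLt at *
    exact ⟨by simp only at h1 ⊢; omega, by simp only at h2 ⊢; omega⟩⟩

/-- the shifted configuration `ω_v(e) = ω(e + v)` -/
def shiftC (v : Z2) (ω : Config) : Config := fun e => ω (shiftE v e)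


/-! The cone condition keeps `y - x` at angle at least `q₀` from the line `ℝ x`, while `y` is
within `q₀/2` of the direction of `x`; so `y - x` makes an angle in `[q₀/2, π - q₀/2]` with `y`.
The law of sines in the triangle `0, x, y` then gives
`sin(q₀/2) ‖y - x‖ ≤ sin ∠(x,y) ‖x‖ ≤ ∠(x,y) ‖x‖`. -/

open InnerProductGeometry

lemma Real.sin_le_sin_of_le_of_le_pi_sub {c t : ℝ} (hc : -(Real.pi / 2) ≤ c) (h₁ : c ≤ t)
    (h₂ : t ≤ Real.pi - c) : Real.sin c ≤ Real.sin t := by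
  rcases le_or_gt t (Real.pi / 2) with ht | ht
  · exact Real.sin_le_sin_of_le_of_le_pi_div_two hc ht h₁
  · rw [← Real.sin_pi_sub t]
    exact Real.sin_le_sin_of_le_of_le_pi_div_two hc (by linarith) (by linarith)

section InnerProductSpace

variable {V : Type*} [NormedAddCommGroup V] [InnerProductSpace ℝ V]

lemma InnerProductGeometry.abs_angle_sub_angle_le (x y w : V) :
    |angle x w - angle y w| ≤ angle x y := by
  have hx := angle_le_angle_add_angle x y w
  have hy := angle_le_angle_add_angle y x w
  rw [angle_comm y x] at hy
  exact abs_sub_le_iff.2 ⟨by linarith, by linarith⟩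

lemma InnerProductGeometry.angle_mem_Icc_of_inner_eq_zero {x p w : V} {q : ℝ}
    (hxp : ⟪x, p⟫ = 0) (hw : angle w p ≤ Real.pi / 2 - q) :
    angle x w ∈ Set.Icc q (Real.pi - q) := by
  have hx := angle_le_angle_add_angle x w p
  have hnx := angle_le_angle_add_angle (-x) w p
  rw [(inner_eq_zero_iff_angle_eq_pi_div_two x p).1 hxp] at hx
  rw [(inner_eq_zero_iff_angle_eq_pi_div_two (-x) p).1 (by rw [inner_neg_left, hxp, neg_zero]),
    angle_neg_left] at hnx
  exact ⟨by linarith, by linarith⟩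

lemma InnerProductGeometry.sin_angle_sub_mul_norm_sub (x y : V) :
    Real.sin (angle y (y - x)) * ‖y - x‖ = Real.sin (angle x y) * ‖x‖ := by
  rw [sin_angle_mul_norm_eq_sin_angle_mul_norm x y, ← neg_sub y x, angle_neg_right,
    Real.sin_pi_sub, norm_neg]

end InnerProductSpace

lemma inner_perp_right (v : E2) : ⟪v, perp v⟫ = 0 := by
  simp only [perp, mk2, WithLp.equiv_symm_apply, PiLp.inner_apply, RCLike.inner_apply,
    Real.ringHom_apply, Fin.sum_univ_two, Matrix.cons_val_zero, Matrix.cons_val_one,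
    Matrix.cons_val_fin_one]
  ring

lemma angle_sub_mem_Icc_of_mem_cone {q : ℝ} (hq : q ≤ Real.pi / 2) {x y : E2}
    (hy : y ∈ coneF q x ∪ coneB q x) : angle x (y - x) ∈ Set.Icc q (Real.pi - q) := by
  rcases hy with (rfl | hy) | (rfl | hy)
  · rw [sub_self, angle_zero_right]
    exact ⟨hq, by linarith⟩
  · exact angle_mem_Icc_of_inner_eq_zero (inner_perp_right x) hy
  · rw [sub_self, angle_zero_right]
    exact ⟨hq, by linarith⟩
  · exact angle_mem_Icc_of_inner_eq_zero (by rw [inner_neg_right, inner_perp_right, neg_zero]) hy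

theorem dist_le_of_angle_general (q₀ : ℝ) (hq : q₀ ∈ Set.Ioo 0 (Real.pi / 2)) (x y : E2)
    (hang : ang x y ≤ q₀ / 2)
    (hmem : y ∈ coneF q₀ x ∪ coneB q₀ x) :
    ‖y - x‖ ≤ (Real.sin (q₀ / 2))⁻¹ * ‖x‖ * ang x y := by
  obtain ⟨hq₀, hq⟩ := hq
  obtain ⟨hlo, hhi⟩ := angle_sub_mem_Icc_of_mem_cone hq.le hmem
  have hdev := abs_le.1 (abs_angle_sub_angle_le x y (y - x))
  have hxy : angle x y ≤ q₀ / 2 := hang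
  have hsin : Real.sin (q₀ / 2) ≤ Real.sin (angle y (y - x)) :=
    Real.sin_le_sin_of_le_of_le_pi_sub (by linarith [Real.pi_pos]) (by linarith) (by linarith)
  have hpos : 0 < Real.sin (q₀ / 2) :=
    Real.sin_pos_of_pos_of_lt_pi (by linarith) (by linarith [Real.pi_pos])
  rw [mul_assoc, ← div_eq_inv_mul, le_div_iff₀ hpos]
  calc ‖y - x‖ * Real.sin (q₀ / 2) ≤ Real.sin (angle y (y - x)) * ‖y - x‖ := by
        rw [mul_comm]; exact mul_le_mul_of_nonneg_right hsin (norm_nonneg _)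
    _ = Real.sin (angle x y) * ‖x‖ := sin_angle_sub_mul_norm_sub x y
    _ ≤ angle x y * ‖x‖ :=
        mul_le_mul_of_nonneg_right (Real.sin_le (angle_nonneg x y)) (norm_nonneg x)
    _ = ‖x‖ * ang x y := mul_comm _ _

/-- **Control near a regeneration direction.** If `∠(x,y) ≤ q₀/2` and `y` lies in the
forward or backward cone of `x`, then `‖y - x‖ ≤ csc(q₀/2) ‖x‖ ∠(x,y)`. -/
theorem dist_le_of_angle (q₀ : ℝ) (hq : q₀ ∈ Set.Ioo 0 (Real.pi / 2)) (x y : E2)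
    (hx : x ≠ 0) (hy : y ≠ 0) (hang : ang x y ≤ q₀ / 2)
    (hmem : y ∈ coneF q₀ x ∪ coneB q₀ x) :
    ‖y - x‖ ≤ (Real.sin (q₀ / 2))⁻¹ * ‖x‖ * ang x y :=
  dist_le_of_angle_general q₀ hq x y hang hmem
end
end

section
/- Let O, A, B ∈ ℝ² with A ≠ B, and let C be a point of the closed segment [O,B] and D a point of the closed segment [O,A]. Then the planar Lebesgue measure satisfies vol( conv{O,A,B} ∖ conv{O,C,D} ) ≤ ‖A − B‖ · max{ d(C, ℓ_{A,B}), d(D, ℓ_{A,B}) }, where ℓ_{A,B} is the line through A and B and d is the Euclidean distance. -/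
open MeasureTheory Set Metric Filter
open scoped Classical ENNReal Topology Pointwise RealInnerProductSpace

noncomputable section

/-!
Write `C = O + s (B - O)`, `D = O + t (A - O)` and `r = min s t`. A point
`O + b (A - O) + c (B - O)` of the triangle `OAB` with `b + c ≤ r` already lies in the triangle
`OCD`, so the difference lies in the parallelogram at `A` spanned by `B - A` and
`(1 - r) (O - A)`, of area `(1 - r) |ω (B - A) (O - A)|` for the area form `ω`. Since
`|ω (B - A) (P - A)| ≤ ‖B - A‖ d(P, ℓ_{A,B})` for every `P`, and `ω (B - A) (C - A)`,
`ω (B - A) (D - A)` are `(1 - s)` and `(1 - t)` times `ω (B - A) (O - A)`, this area is at most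
`‖A - B‖ max (d(C, ℓ_{A,B}), d(D, ℓ_{A,B}))`.
-/

section Triangle

variable {𝕜 E : Type*} [Field 𝕜] [LinearOrder 𝕜] [IsStrictOrderedRing 𝕜] [AddCommGroup E]
  [Module 𝕜 E]

theorem mem_convexHull_triple_iff {O A B x : E} :
    x ∈ convexHull 𝕜 {O, A, B} ↔
      ∃ b c : 𝕜, 0 ≤ b ∧ 0 ≤ c ∧ b + c ≤ 1 ∧ O + b • (A - O) + c • (B - O) = x := by
  rw [← convexJoin_singleton_segment, convexJoin_singleton_left, mem_iUnion₂]
  simp_rw [segment_eq_image' 𝕜, mem_image]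
  constructor
  · rintro ⟨_, ⟨φ, ⟨hφ₀, hφ₁⟩, rfl⟩, θ, ⟨hθ₀, hθ₁⟩, rfl⟩
    refine ⟨θ * (1 - φ), θ * φ, by nlinarith, by positivity, by nlinarith, by module⟩
  · rintro ⟨b, c, hb, hc, hbc, rfl⟩
    rcases (add_nonneg hb hc).eq_or_lt with h | h
    · obtain ⟨rfl, rfl⟩ : b = 0 ∧ c = 0 := ⟨by linarith, by linarith⟩
      exact ⟨A, ⟨0, ⟨le_rfl, zero_le_one⟩, by simp⟩, 0, ⟨le_rfl, zero_le_one⟩, by simp⟩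
    · refine ⟨A + (c / (b + c)) • (B - A), ⟨c / (b + c), ⟨by positivity, ?_⟩, rfl⟩,
        b + c, ⟨h.le, hbc⟩, ?_⟩
      · rw [div_le_one h]; linarith
      · match_scalars <;> field_simp <;> ring

theorem add_smul_add_smul_mem_convexHull_of_add_le {O A B : E} {b c s t : 𝕜} (hb : 0 ≤ b)
    (hc : 0 ≤ c) (hs : b + c ≤ s) (ht : b + c ≤ t) :
    O + b • (A - O) + c • (B - O) ∈ convexHull 𝕜 {O, O + s • (B - O), O + t • (A - O)} := by
  rw [mem_convexHull_triple_iff]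
  rcases (add_nonneg hb hc).eq_or_lt with h | h
  · obtain ⟨rfl, rfl⟩ : b = 0 ∧ c = 0 := ⟨by linarith, by linarith⟩
    exact ⟨0, 0, le_rfl, le_rfl, by norm_num, by simp⟩
  have hs₀ : 0 < s := h.trans_le hs
  have ht₀ : 0 < t := h.trans_le ht
  refine ⟨c / s, b / t, by positivity, by positivity, ?_, ?_⟩
  · calc c / s + b / t ≤ c / (b + c) + b / (b + c) := by gcongr
      _ = 1 := by rw [← add_div, add_comm, div_self h.ne']
  · simp only [add_sub_cancel_left, smul_smul, div_mul_cancel₀ _ hs₀.ne',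
      div_mul_cancel₀ _ ht₀.ne']
    abel

end Triangle

theorem convexHull_triple_diff_subset_vadd_parallelepiped {E : Type*} [AddCommGroup E]
    [Module ℝ E] (O A B : E) (s t : ℝ) :
    convexHull ℝ {O, A, B} \ convexHull ℝ {O, O + s • (B - O), O + t • (A - O)} ⊆
      A +ᵥ parallelepiped ![B - A, (1 - min s t) • (O - A)] := by
  rintro _ ⟨hx, hx'⟩
  obtain ⟨b, c, hb, hc, hbc, rfl⟩ := mem_convexHull_triple_iff.1 hx
  have hr : min s t < b + c := by
    by_contra! h
    exact hx' (add_smul_add_smul_mem_convexHull_of_add_le hb hc (h.trans (min_le_left s t))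
      (h.trans (min_le_right s t)))
  have hr' : 0 < 1 - min s t := by linarith
  refine ⟨c • (B - A) + (1 - b - c) • (O - A), ?_, by simp only [vadd_eq_add]; module⟩
  rw [mem_parallelepiped_iff]
  refine ⟨![c, (1 - b - c) / (1 - min s t)], ?_, ?_⟩
  · simp only [mem_Icc, Pi.le_def, Fin.forall_fin_two, Matrix.cons_val_zero,
      Matrix.cons_val_one, Pi.zero_apply, Pi.one_apply]
    exact ⟨⟨hc, div_nonneg (by linarith) hr'.le⟩, by linarith,
      (div_le_one hr').2 (by linarith)⟩
  · simp only [Fin.sum_univ_two, Matrix.cons_val_zero, Matrix.cons_val_one, smul_smul,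
      div_mul_cancel₀ _ hr'.ne']

section Plane

variable {E : Type*} [NormedAddCommGroup E] [InnerProductSpace ℝ E]
  [Fact (Module.finrank ℝ E = 2)]

attribute [local instance] FiniteDimensional.of_fact_finrank_eq_two

theorem Orientation.abs_areaForm_le_mul_infDist (o : Orientation ℝ E (Fin 2)) (A B P : E) :
    |o.areaForm (B - A) (P - A)| ≤ ‖B - A‖ * infDist P (affineSpan ℝ {A, B}) := by
  rcases eq_or_ne A B with rfl | hAB
  · simp
  have hBA : 0 < ‖B - A‖ := norm_pos_iff.2 (sub_ne_zero.2 hAB.symm)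
  rw [← div_le_iff₀' hBA, le_infDist ⟨A, left_mem_affineSpan_pair ℝ A B⟩]
  intro y hy
  obtain ⟨r, rfl⟩ := mem_affineSpan_pair_iff_exists_lineMap_eq.1 hy
  rw [div_le_iff₀' hBA, dist_eq_norm]
  have : P - A = (P - AffineMap.lineMap A B r) + r • (B - A) := by
    rw [AffineMap.lineMap_apply_module']; abel
  rw [this, map_add, map_smul, o.areaForm_apply_self, smul_zero, add_zero]
  exact o.abs_areaForm_le _ _

theorem Orientation.volume_parallelepiped_eq_abs_areaForm [MeasurableSpace E] [BorelSpace E]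
    (o : Orientation ℝ E (Fin 2)) (u v : E) :
    volume (parallelepiped ![u, v]) = ENNReal.ofReal |o.areaForm u v| := by
  rw [← o.measure_eq_volume, o.volumeForm.measure_parallelepiped, o.areaForm_to_volumeForm]

theorem volume_convexHull_triple_diff_le [MeasurableSpace E] [BorelSpace E] (O A B C D : E)
    (hC : C ∈ segment ℝ O B) (hD : D ∈ segment ℝ O A) :
    volume (convexHull ℝ {O, A, B} \ convexHull ℝ {O, C, D}) ≤
      ENNReal.ofReal (‖A - B‖ * max (infDist C (affineSpan ℝ {A, B} : Set E))
        (infDist D (affineSpan ℝ {A, B} : Set E))) := by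
  rw [segment_eq_image'] at hC hD
  obtain ⟨s, ⟨-, hs⟩, rfl⟩ := hC
  obtain ⟨t, ⟨-, ht⟩, rfl⟩ := hD
  let o : Orientation ℝ E (Fin 2) := (Module.finBasisOfFinrankEq ℝ E Fact.out).orientation
  have hCℓ : (1 - s) * |o.areaForm (B - A) (O - A)| ≤
      ‖B - A‖ * infDist (O + s • (B - O)) (affineSpan ℝ {A, B}) :=
    calc _ = |o.areaForm (B - A) (O + s • (B - O) - A)| := by
          rw [show O + s • (B - O) - A = (1 - s) • (O - A) + s • (B - A) by module, map_add,
            map_smul, map_smul, o.areaForm_apply_self, smul_zero, add_zero, smul_eq_mul, abs_mul,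
            abs_of_nonneg (sub_nonneg.2 hs)]
      _ ≤ _ := o.abs_areaForm_le_mul_infDist A B _
  have hDℓ : (1 - t) * |o.areaForm (B - A) (O - A)| ≤
      ‖B - A‖ * infDist (O + t • (A - O)) (affineSpan ℝ {A, B}) :=
    calc _ = |o.areaForm (B - A) (O + t • (A - O) - A)| := by
          rw [show O + t • (A - O) - A = (1 - t) • (O - A) by module, map_smul, smul_eq_mul,
            abs_mul, abs_of_nonneg (sub_nonneg.2 ht)]
      _ ≤ _ := o.abs_areaForm_le_mul_infDist A B _
  have hr : 0 ≤ 1 - min s t := sub_nonneg.2 (min_le_of_left_le hs)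
  calc _ ≤ volume (A +ᵥ parallelepiped ![B - A, (1 - min s t) • (O - A)]) :=
        measure_mono (convexHull_triple_diff_subset_vadd_parallelepiped O A B s t)
    _ = ENNReal.ofReal ((1 - min s t) * |o.areaForm (B - A) (O - A)|) := by
        rw [measure_vadd, o.volume_parallelepiped_eq_abs_areaForm, map_smul, smul_eq_mul,
          abs_mul, abs_of_nonneg hr]
    _ ≤ _ := by
        refine ENNReal.ofReal_le_ofReal ?_
        rw [← max_sub_sub_left, max_mul_of_nonneg _ _ (abs_nonneg _), norm_sub_rev,
          mul_max_of_nonneg _ _ (norm_nonneg _)]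
        exact max_le_max hCℓ hDℓ

end Plane

theorem quadrilateral_area_bound_general (O A B C D : E2)
    (hC : C ∈ segment ℝ O B) (hD : D ∈ segment ℝ O A) :
    vol (convexHull ℝ {O, A, B} \ convexHull ℝ {O, C, D}) ≤
      ‖A - B‖ * max (infDist C (affineSpan ℝ {A, B} : Set E2))
        (infDist D (affineSpan ℝ {A, B} : Set E2)) := by
  have : Fact (Module.finrank ℝ E2 = 2) := ⟨finrank_euclideanSpace_fin⟩
  exact ENNReal.toReal_le_of_le_ofReal
    (mul_nonneg (norm_nonneg _) (le_max_of_le_left infDist_nonneg))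
    (volume_convexHull_triple_diff_le O A B C D hC hD)

/-- **The quadrilateral area bound.** For `C ∈ [O,B]` and `D ∈ [O,A]`,
`vol(conv{O,A,B} ∖ conv{O,C,D}) ≤ ‖A - B‖ max{d(C, ℓ_{A,B}), d(D, ℓ_{A,B})}`. -/
theorem quadrilateral_area_bound (O A B C D : E2) (hAB : A ≠ B)
    (hC : C ∈ segment ℝ O B) (hD : D ∈ segment ℝ O A) :
    vol (convexHull ℝ {O, A, B} \ convexHull ℝ {O, C, D}) ≤
      ‖A - B‖ * max (infDist C (affineSpan ℝ {A, B} : Set E2))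
        (infDist D (affineSpan ℝ {A, B} : Set E2)) :=
  quadrilateral_area_bound_general O A B C D hC hD
end
end
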